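/- Let n ≥ 3 and m ≥ 2. The group Z_n(D_{Z_m}(1)) is isomorphic to the group presented by generators h_1, …, h_{n-1}, b, t, w with defining relations: (R1) h_j h_{j+1} h_j = h_{j+1} h_j h_{j+1} for 1 ≤ j ≤ n−2, h_j h_k = h_k h_j for |j−k| ≥ 2, b h_{n-2} b = h_{n-2} b h_{n-2}, b h_j = h_j b for 1 ≤ j ≤ n−3; (R2) t h_1 t h_1 = h_1 t h_1 t, t h_j = h_j t for 2 ≤ j ≤ n−1, and t b = b t; (R3) ⟨h_{n-1},b⟩_m = ⟨b,h_{n-1}⟩_m; (R4) (h_{n-1} b h_{n-2})^2 = (h_{n-2} h_{n-1} b)^2; (S1) w^m = 1; (C1) w h_j w^{-1} = h_j for 1 ≤ j ≤ n−2 and w t w^{-1} = t; (C2) w h_{n-1} w^{-1} = b and w b w^{-1} = b^{-1} h_{n-1} b. An isomorphism is given by sending h_j ↦ h_j, t ↦ t and u ↦ h_1⋯h_{n-1} w h_{n-1}^{-1}⋯h_1^{-1}. -/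

import Mathlib

namespace Stmt5

/-- `alt x y k` is the alternating product `x y x y ⋯` with `k` factors, starting with `x`. -/
def alt {G : Type*} [Monoid G] (x y : G) : ℕ → G
  | 0 => 1
  | k + 1 => x * alt y x k

/-- Generators of `Z_n(D_{Z_m}(1))`: `Sum.inl i` is `h_{i+1}`, `Sum.inr false` is `t`,
`Sum.inr true` is `u`. -/
abbrev ZGen (n : ℕ) := Fin (n - 1) ⊕ Bool

def zh {n : ℕ} (i : Fin (n - 1)) : FreeGroup (ZGen n) := FreeGroup.of (Sum.inl i)

def zt {n : ℕ} : FreeGroup (ZGen n) := FreeGroup.of (Sum.inr false)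

def zu {n : ℕ} : FreeGroup (ZGen n) := FreeGroup.of (Sum.inr true)

/-- Defining relations of `Z_n(D_{Z_m}(1))`. -/
def zrels (n m : ℕ) : Set (FreeGroup (ZGen n)) :=
  {r | r = zu ^ m
    ∨ (∃ i j : Fin (n - 1), (i : ℕ) + 1 = (j : ℕ) ∧
        r = zh i * zh j * zh i * (zh j * zh i * zh j)⁻¹)
    ∨ (∃ i j : Fin (n - 1), (i : ℕ) + 2 ≤ (j : ℕ) ∧
        r = zh i * zh j * (zh j * zh i)⁻¹)
    ∨ (∃ (v : FreeGroup (ZGen n)) (i : Fin (n - 1)), (v = zt ∨ v = zu) ∧ 1 ≤ (i : ℕ) ∧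
        r = v * zh i * (zh i * v)⁻¹)
    ∨ (∃ (v : FreeGroup (ZGen n)) (i : Fin (n - 1)), (v = zt ∨ v = zu) ∧ (i : ℕ) = 0 ∧
        r = (zh i * v * zh i) * v * (v * (zh i * v * zh i))⁻¹)
    ∨ (∃ i : Fin (n - 1), (i : ℕ) = 0 ∧
        r = zt * ((zh i)⁻¹ * zu * zh i) * (((zh i)⁻¹ * zu * zh i) * zt)⁻¹)}

/-- The orbifold braid group `Z_n(D_{Z_m}(1))`. -/
abbrev Z (n m : ℕ) := PresentedGroup (zrels n m)

/-- Generators of the group `B`: `Sum.inl i` is `h_{i+1}`, `Sum.inr 0` is `b`,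
`Sum.inr 1` is `t`, `Sum.inr 2` is `w`. -/
abbrev BGen (n : ℕ) := Fin (n - 1) ⊕ Fin 3

def bh {n : ℕ} (i : Fin (n - 1)) : FreeGroup (BGen n) := FreeGroup.of (Sum.inl i)

def bb {n : ℕ} : FreeGroup (BGen n) := FreeGroup.of (Sum.inr 0)

def bt {n : ℕ} : FreeGroup (BGen n) := FreeGroup.of (Sum.inr 1)

def bw {n : ℕ} : FreeGroup (BGen n) := FreeGroup.of (Sum.inr 2)

/-- Defining relations (R1)-(R4), (S1), (C1)-(C2) of the group `B`. -/
def brels (n m : ℕ) : Set (FreeGroup (BGen n)) :=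
  {r |
    -- (R1)
      (∃ i j : Fin (n - 1), (i : ℕ) + 1 = (j : ℕ) ∧
        r = bh i * bh j * bh i * (bh j * bh i * bh j)⁻¹)
    ∨ (∃ i j : Fin (n - 1), (i : ℕ) + 2 ≤ (j : ℕ) ∧
        r = bh i * bh j * (bh j * bh i)⁻¹)
    ∨ (∃ i : Fin (n - 1), (i : ℕ) + 3 = n ∧
        r = bb * bh i * bb * (bh i * bb * bh i)⁻¹)
    ∨ (∃ i : Fin (n - 1), (i : ℕ) + 4 ≤ n ∧ r = bb * bh i * (bh i * bb)⁻¹)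
    -- (R2)
    ∨ (∃ i : Fin (n - 1), (i : ℕ) = 0 ∧
        r = bt * bh i * bt * bh i * (bh i * bt * bh i * bt)⁻¹)
    ∨ (∃ i : Fin (n - 1), 1 ≤ (i : ℕ) ∧ r = bt * bh i * (bh i * bt)⁻¹)
    ∨ r = bt * bb * (bb * bt)⁻¹
    -- (R3)
    ∨ (∃ i : Fin (n - 1), (i : ℕ) + 2 = n ∧ r = alt (bh i) bb m * (alt bb (bh i) m)⁻¹)
    -- (R4)
    ∨ (∃ i j : Fin (n - 1), (i : ℕ) + 2 = n ∧ (j : ℕ) + 3 = n ∧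
        r = (bh i * bb * bh j) ^ 2 * ((bh j * bh i * bb) ^ 2)⁻¹)
    -- (S1)
    ∨ r = bw ^ m
    -- (C1)
    ∨ (∃ i : Fin (n - 1), (i : ℕ) + 3 ≤ n ∧ r = bw * bh i * bw⁻¹ * (bh i)⁻¹)
    ∨ r = bw * bt * bw⁻¹ * bt⁻¹
    -- (C2)
    ∨ (∃ i : Fin (n - 1), (i : ℕ) + 2 = n ∧ r = bw * bh i * bw⁻¹ * bb⁻¹)
    ∨ (∃ i : Fin (n - 1), (i : ℕ) + 2 = n ∧ r = bw * bb * bw⁻¹ * (bb⁻¹ * bh i * bb)⁻¹)}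

/-- The group `B` from Statement 5. -/
abbrev B (n m : ℕ) := PresentedGroup (brels n m)

/-- The product `h_1 h_2 ⋯ h_{n-1}` in `B`. -/
def hprodB (n m : ℕ) : B n m :=
  (List.ofFn (fun i : Fin (n - 1) => (PresentedGroup.of (Sum.inl i) : B n m))).prod


/-!
Write `Δ = h₁ ⋯ h_{n-1}`. The inverse isomorphism fixes the `h_i` and `t` and sends
`w ↦ Δ⁻¹ u Δ`, `b ↦ w h_{n-1} w⁻¹`. To check the relations, conjugate by
`g = (h₂ ⋯ h_{n-1}) Δ`: in any braid group `g h_{n-1} g⁻¹ = h₁`, and `g w g⁻¹ = u` (in `B` because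
`Δ⁻¹ (h₂ ⋯ h_{n-1}) Δ = h₁ ⋯ h_{n-2}` commutes with `w`). After this conjugation (C2) becomes
`(u h₁)² = (h₁ u)²`, and (R3), (R4) become relations among `h₁`, `h₂` and `u`: conjugation by
`u h₁` swaps `h₁` and `u h₁ u⁻¹` and fixes `⟨h₁, u h₁ u⁻¹⟩_m = (u h₁)^m` when `u^m = 1`, and (R4)
is an identity in the Artin group of type `B₃` generated by `u, h₁, h₂`.
-/

theorem map_alt {M N F : Type*} [Monoid M] [Monoid N] [FunLike F M N] [MonoidHomClass F M N]
    (f : F) (x y : M) : ∀ k, f (alt x y k) = alt (f x) (f y) k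
  | 0 => map_one f
  | k + 1 => by rw [alt, alt, map_mul, map_alt f y x k]

theorem alt_add_two {M : Type*} [Monoid M] (x y : M) (k : ℕ) :
    alt x y (k + 2) = x * y * alt x y k := by
  rw [alt, alt, mul_assoc]

theorem map_conj {G H F : Type*} [Group G] [Group H] [FunLike F G H] [MonoidHomClass F G H]
    (f : F) (g a : G) : f (MulAut.conj g a) = MulAut.conj (f g) (f a) := by
  simp

section Conjugation

variable {G : Type*} [Group G]

theorem _root_.SemiconjBy.conj_eq {g a b : G} (h : SemiconjBy g a b) : MulAut.conj g a = b := by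
  rw [MulAut.conj_apply, mul_inv_eq_iff_eq_mul]
  exact h

theorem _root_.SemiconjBy.conj_inv_eq {g a b : G} (h : SemiconjBy g a b) :
    MulAut.conj g⁻¹ b = a :=
  (SemiconjBy.inv_symm_left_iff.mpr h).conj_eq

theorem _root_.Commute.conj_eq {g a : G} (h : Commute g a) : MulAut.conj g a = a :=
  SemiconjBy.conj_eq h

theorem conj_conj_apply (g w a : G) :
    MulAut.conj g (MulAut.conj w a) = MulAut.conj (MulAut.conj g w) (MulAut.conj g a) := by
  simp only [MulAut.conj_apply]
  group

theorem conj_conj_inv (g a : G) : MulAut.conj g (MulAut.conj g⁻¹ a) = a := by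
  simp [mul_assoc]

theorem conj_inv_conj (g a : G) : MulAut.conj g⁻¹ (MulAut.conj g a) = a := by
  simp [mul_assoc]

theorem conj_conj_eq_iff_artin4 {w x : G} :
    w * (w * x * w⁻¹) * w⁻¹ = (w * x * w⁻¹)⁻¹ * x * (w * x * w⁻¹) ↔
      w * x * w * x = x * w * x * w := by
  rw [← mul_inv_eq_one, ← mul_inv_eq_one (a := w * x * w * x)]
  have h : w * (w * x * w⁻¹) * w⁻¹ * ((w * x * w⁻¹)⁻¹ * x * (w * x * w⁻¹))⁻¹ =
      MulAut.conj (w * x⁻¹ * w⁻¹) (w * x * w * x * (x * w * x * w)⁻¹) := by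
    rw [MulAut.conj_apply]
    group
  rw [h, map_eq_one_iff _ (MulAut.conj _).injective]

end Conjugation

section ArtinRelations

variable {G : Type*} [Group G] {s s' u : G}

theorem alt_self_conj_eq (hq : u * s * u * s = s * u * s * u) :
    ∀ m, alt s (MulAut.conj u s) m = u⁻¹ ^ m * (u * s) ^ m
  | 0 => by simp [alt]
  | 1 => by simp [alt]
  | m + 2 => by
    have hcomm : Commute u⁻¹ ((u * s) ^ 2) := by
      refine Commute.inv_left ?_
      calc u * (u * s) ^ 2 = u * (u * s * u * s) := by rw [sq]; group
        _ = u * (s * u * s * u) := by rw [hq]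
        _ = (u * s) ^ 2 * u := by rw [sq]; group
    have hsc : s * MulAut.conj u s = u⁻¹ ^ 2 * (u * s) ^ 2 := by
      calc s * MulAut.conj u s = u⁻¹ * (u * s * u * s) * u⁻¹ := by
            rw [MulAut.conj_apply]; group
        _ = u⁻¹ * (s * u * s * u) * u⁻¹ := by rw [hq]
        _ = u⁻¹ ^ 2 * (u * s) ^ 2 := by simp only [sq]; group
    rw [alt_add_two, alt_self_conj_eq hq m, hsc, pow_add, pow_add, mul_assoc, mul_assoc,
      ← mul_assoc ((u * s) ^ 2), (hcomm.pow_left m).symm.eq]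
    group

theorem alt_conj_eq_of_pow_eq_one {m : ℕ} (hq : u * s * u * s = s * u * s * u) (hu : u ^ m = 1) :
    alt s (MulAut.conj u s) m = alt (MulAut.conj u s) s m := by
  have hs : MulAut.conj (u * s) s = MulAut.conj u s := by simp
  have hc : MulAut.conj (u * s) (MulAut.conj u s) = s := by
    simp only [MulAut.conj_apply]
    calc u * s * (u * s * u⁻¹) * (u * s)⁻¹ = u * s * u * s * u⁻¹ * s⁻¹ * u⁻¹ := by
          group
      _ = s := by rw [hq]; group
  have hpow : alt s (MulAut.conj u s) m = (u * s) ^ m := by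
    rw [alt_self_conj_eq hq, inv_pow, hu, inv_one, one_mul]
  calc alt s (MulAut.conj u s) m = MulAut.conj (u * s) ((u * s) ^ m) := by
        rw [hpow, (Commute.self_pow _ _).conj_eq]
    _ = alt (MulAut.conj u s) s m := by rw [← hpow, map_alt, hs, hc]

theorem artin4_sus_of_braid (hb : s * s' * s = s' * s * s') (hc : Commute u s')
    (hq : u * s * u * s = s * u * s * u) :
    s * u * s * s' * (s * u * s) * s' = s' * (s * u * s) * s' * (s * u * s) := by
  have hc' : s' * u = u * s' := hc.eq.symm
  calc s * u * s * s' * (s * u * s) * s'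
      = s * u * (s * s' * s) * u * s * s' := by group
    _ = s * u * s' * s * (s' * u) * s * s' := by rw [hb]; group
    _ = s * u * s' * s * u * (s' * s * s') := by rw [hc']; group
    _ = s * (u * s') * s * u * s * s' * s := by rw [← hb]; group
    _ = s * s' * (u * s * u * s) * s' * s := by rw [← hc']; group
    _ = s * s' * s * u * s * u * s' * s := by rw [hq]; group
    _ = s' * s * (s' * u) * s * u * s' * s := by rw [hb]; group
    _ = s' * s * u * s' * s * (u * s') * s := by rw [hc']; group
    _ = s' * s * u * (s' * s * s') * u * s := by rw [← hc']; group
    _ = s' * (s * u * s) * s' * (s * u * s) := by rw [← hb]; group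

theorem sq_mul_conj_mul_eq (hb : s * s' * s = s' * s * s') (hc : Commute u s')
    (hq : u * s * u * s = s * u * s * u) :
    (s * MulAut.conj u s * s') ^ 2 = (s' * s * MulAut.conj u s) ^ 2 := by
  have hAu : Commute (s * u * s) u := by
    show s * u * s * u = u * (s * u * s)
    rw [← hq]
    group
  have hA : Commute s' ((s * u * s * s') ^ 2) := by
    calc s' * (s * u * s * s') ^ 2 = s' * (s * u * s) * s' * (s * u * s) * s' := by
          rw [sq]; group
      _ = s * u * s * s' * (s * u * s) * s' * s' := by rw [artin4_sus_of_braid hb hc hq]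
      _ = (s * u * s * s') ^ 2 * s' := by rw [sq]; group
  have h1 : s * MulAut.conj u s * s' = s * u * s * s' * u⁻¹ := by
    calc s * MulAut.conj u s * s' = s * u * s * (u⁻¹ * s') := by rw [MulAut.conj_apply]; group
      _ = s * u * s * s' * u⁻¹ := by rw [hc.inv_left.eq]; group
  have h2 : (s' * s * MulAut.conj u s) ^ 2 = MulAut.conj s' ((s * MulAut.conj u s * s') ^ 2) := by
    simp only [map_pow, MulAut.conj_apply]
    congr 1
    group
  rw [h2, h1, (hAu.inv_right.mul_left hc.symm.inv_right).mul_pow,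
    (hA.mul_right (hc.symm.inv_right.pow_right 2)).conj_eq]

end ArtinRelations

section Braid

variable {M : Type*} [Monoid M]

def ordProd (x : ℕ → M) (k : ℕ) : M := (List.ofFn fun i : Fin k => x i).prod

@[simp]
theorem ordProd_zero (x : ℕ → M) : ordProd x 0 = 1 := by simp [ordProd]

theorem ordProd_succ (x : ℕ → M) (k : ℕ) :
    ordProd x (k + 1) = x 0 * ordProd (fun i => x (i + 1)) k := by
  simp [ordProd, List.ofFn_succ]

theorem map_ordProd {N F : Type*} [Monoid N] [FunLike F M N] [MonoidHomClass F M N] (f : F)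
    (x : ℕ → M) (k : ℕ) : f (ordProd x k) = ordProd (fun i => f (x i)) k := by
  simp [ordProd, map_list_prod, List.map_ofFn, Function.comp_def]

theorem SemiconjBy.ordProd_right {a : M} {x y : ℕ → M} :
    ∀ {k}, (∀ i < k, SemiconjBy a (x i) (y i)) → SemiconjBy a (ordProd x k) (ordProd y k)
  | 0, _ => by simp
  | k + 1, h => by
    rw [ordProd_succ, ordProd_succ]
    exact (h 0 k.succ_pos).mul_right (SemiconjBy.ordProd_right fun i hi => h (i + 1) (by omega))

theorem Commute.ordProd_right {a : M} {x : ℕ → M} {k : ℕ} (h : ∀ i < k, Commute a (x i)) :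
    Commute a (ordProd x k) :=
  SemiconjBy.ordProd_right h

structure IsBraidFamily (k : ℕ) (x : ℕ → M) : Prop where
  braid : ∀ i, i + 1 < k → x i * x (i + 1) * x i = x (i + 1) * x i * x (i + 1)
  commute : ∀ i j, i + 2 ≤ j → j < k → Commute (x i) (x j)

namespace IsBraidFamily

variable {x : ℕ → M}

theorem tail {k : ℕ} (h : IsBraidFamily (k + 1) x) : IsBraidFamily k (fun i => x (i + 1)) where
  braid i hi := h.braid (i + 1) (by omega)
  commute i j hij hj := h.commute (i + 1) (j + 1) (by omega) (by omega)

theorem commute_ordProd_tail_tail {k : ℕ} (h : IsBraidFamily (k + 2) x) :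
    Commute (x 0) (ordProd (fun i => x (i + 2)) k) :=
  Commute.ordProd_right fun i _ => h.commute 0 (i + 2) (by omega) (by omega)

theorem semiconjBy_ordProd :
    ∀ {k : ℕ} {x : ℕ → M}, IsBraidFamily k x → ∀ {i}, i + 1 < k →
      SemiconjBy (ordProd x k) (x i) (x (i + 1))
  | k + 2, x, h, 0, _ => by
    have hc := h.commute_ordProd_tail_tail
    simp only [SemiconjBy, ordProd_succ x, ordProd_succ (fun i => x (i + 1))]
    calc x 0 * (x 1 * ordProd (fun i => x (i + 2)) k) * x 0
        = x 0 * x 1 * (ordProd (fun i => x (i + 2)) k * x 0) := by simp only [mul_assoc]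
      _ = x 0 * x 1 * x 0 * ordProd (fun i => x (i + 2)) k := by
        rw [← hc.eq]; simp only [mul_assoc]
      _ = x 1 * (x 0 * (x 1 * ordProd (fun i => x (i + 2)) k)) := by
        rw [h.braid 0 (by omega)]; simp only [mul_assoc]
  | k + 1, x, h, i + 1, hi => by
    rw [ordProd_succ]
    exact SemiconjBy.mul_left (h.commute 0 (i + 2) (by omega) (by omega))
      (semiconjBy_ordProd h.tail (by omega))

theorem semiconjBy_ordProd_ordProd {k : ℕ} (h : IsBraidFamily (k + 1) x) :
    SemiconjBy (ordProd x (k + 1)) (ordProd x k) (ordProd (fun i => x (i + 1)) k) :=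
  SemiconjBy.ordProd_right fun _ hi => h.semiconjBy_ordProd (by omega)

theorem semiconjBy_last : ∀ {k : ℕ} {x : ℕ → M}, IsBraidFamily (k + 1) x →
    SemiconjBy (ordProd (fun i => x (i + 1)) k * ordProd x (k + 1)) (x k) (x 0)
  | 0, x, _ => by simp [SemiconjBy, ordProd_succ]
  | k + 1, x, h => by
    have hb : SemiconjBy (x 1 * x 0) (x 1) (x 0) := by
      simp only [SemiconjBy, ← h.braid 0 (by omega), mul_assoc]
    have hP : ordProd (fun i => x (i + 1)) (k + 1) * ordProd x (k + 2) =
        x 1 * x 0 * (ordProd (fun i => x (i + 2)) k * ordProd (fun i => x (i + 1)) (k + 1)) := by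
      rw [ordProd_succ x, ordProd_succ (fun i => x (i + 1)), mul_assoc, ← mul_assoc _ (x 0),
        ← h.commute_ordProd_tail_tail.eq]
      simp only [mul_assoc]
    rw [hP]
    exact hb.mul_left (semiconjBy_last h.tail)

end IsBraidFamily

end Braid

section Families

variable {G : Type*} [Group G]

-- `x i` stands for `h_{i+1}`, and `N = n - 1` is the number of the `h`'s.
structure IsZFamily (N m : ℕ) (x : ℕ → G) (t u : G) : Prop extends IsBraidFamily N x where
  pow_u : u ^ m = 1
  commute_t : ∀ i, 1 ≤ i → i < N → Commute t (x i)
  commute_u : ∀ i, 1 ≤ i → i < N → Commute u (x i)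
  artin4_t : t * x 0 * t * x 0 = x 0 * t * x 0 * t
  artin4_u : u * x 0 * u * x 0 = x 0 * u * x 0 * u
  commute_t_conj : Commute t ((x 0)⁻¹ * u * x 0)

structure IsBFamily (N m : ℕ) (x : ℕ → G) (b t w : G) : Prop extends IsBraidFamily N x where
  braid_b : b * x (N - 2) * b = x (N - 2) * b * x (N - 2)
  commute_b : ∀ i, i + 3 ≤ N → Commute b (x i)
  artin4_t : t * x 0 * t * x 0 = x 0 * t * x 0 * t
  commute_t : ∀ i, 1 ≤ i → i < N → Commute t (x i)
  commute_t_b : Commute t b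
  alt_eq : alt (x (N - 1)) b m = alt b (x (N - 1)) m
  sq_eq : (x (N - 1) * b * x (N - 2)) ^ 2 = (x (N - 2) * x (N - 1) * b) ^ 2
  pow_w : w ^ m = 1
  commute_w : ∀ i, i + 2 ≤ N → Commute w (x i)
  commute_w_t : Commute w t
  conj_w_last : MulAut.conj w (x (N - 1)) = b
  conj_w_b : MulAut.conj w b = b⁻¹ * x (N - 1) * b

def zAssign (n : ℕ) (x : ℕ → G) (t u : G) : ZGen n → G :=
  Sum.elim (fun i => x i) fun v => bif v then u else t

def bAssign (n : ℕ) (x : ℕ → G) (b t w : G) : BGen n → G :=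
  Sum.elim (fun i => x i) ![b, t, w]

theorem lift_zrels_iff {n m : ℕ} (hn : 2 ≤ n) {x : ℕ → G} {t u : G} :
    (∀ r ∈ zrels n m, FreeGroup.lift (zAssign n x t u) r = 1) ↔
      IsZFamily (n - 1) m x t u := by
  simp only [zrels, Set.mem_ofPred_eq, or_imp, forall_and, forall_exists_index, and_imp,
    forall_comm (α := FreeGroup (ZGen n)), forall_eq]
  simp only [zh, zt, zu, zAssign, map_mul, map_inv, map_pow, mul_inv_eq_one,
    FreeGroup.lift_apply_of, Sum.elim_inl, Sum.elim_inr, cond_true, cond_false, Fin.forall_iff]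
  simp only [forall_comm (β := _ = _), forall_eq', forall_eq, show 0 < n - 1 by omega,
    forall_const]
  constructor
  · rintro ⟨hu, hbraid, hcomm, ⟨ht, hux⟩, ⟨ht4, hu4⟩, htu⟩
    exact
      { braid := fun i hi => hbraid i (by omega) hi
        commute := fun i j hij hj => hcomm i (by omega) j hj hij
        pow_u := hu
        commute_t := fun i h1 h2 => ht i h2 h1
        commute_u := fun i h1 h2 => hux i h2 h1
        artin4_t := by simpa only [mul_assoc] using ht4.symm
        artin4_u := by simpa only [mul_assoc] using hu4.symm
        commute_t_conj := htu }
  · intro h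
    exact ⟨h.pow_u, fun i _ hi => h.braid i hi, fun i _ j hj hij => h.commute i j hij hj,
      ⟨fun i hi h1 => h.commute_t i h1 hi, fun i hi h1 => h.commute_u i h1 hi⟩,
      ⟨by simpa only [mul_assoc] using h.artin4_t.symm,
        by simpa only [mul_assoc] using h.artin4_u.symm⟩,
      h.commute_t_conj⟩

theorem lift_brels_iff {n m : ℕ} (hn : 3 ≤ n) {x : ℕ → G} {b t w : G} :
    (∀ r ∈ brels n m, FreeGroup.lift (bAssign n x b t w) r = 1) ↔
      IsBFamily (n - 1) m x b t w := by
  simp only [brels, Set.mem_ofPred_eq, or_imp, forall_and, forall_exists_index, and_imp,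
    forall_comm (α := FreeGroup (BGen n)), forall_eq]
  simp only [bh, bb, bt, bw, bAssign, map_mul, map_inv, map_pow, map_alt, mul_inv_eq_one,
    FreeGroup.lift_apply_of, Sum.elim_inl, Sum.elim_inr, Fin.forall_iff, Matrix.cons_val]
  constructor
  · rintro ⟨hbraid, hcomm, hbb, hbc, ht4, ht, htb, halt, hsq, hw, hwx, hwt, hwl, hwb⟩
    exact
      { braid := fun i hi => hbraid i (by omega) (i + 1) hi rfl
        commute := fun i j hij hj => hcomm i (by omega) j hj hij
        braid_b := hbb (n - 1 - 2) (by omega) (by omega)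
        commute_b := fun i hi => hbc i (by omega) (by omega)
        artin4_t := ht4 0 (by omega) rfl
        commute_t := fun i h1 h2 => ht i h2 h1
        commute_t_b := htb
        alt_eq := halt (n - 1 - 1) (by omega) (by omega)
        sq_eq := hsq (n - 1 - 1) (by omega) (n - 1 - 2) (by omega) (by omega) (by omega)
        pow_w := hw
        commute_w := fun i hi => mul_inv_eq_iff_eq_mul.mp (hwx i (by omega) (by omega))
        commute_w_t := mul_inv_eq_iff_eq_mul.mp hwt
        conj_w_last := hwl (n - 1 - 1) (by omega) (by omega)
        conj_w_b := hwb (n - 1 - 1) (by omega) (by omega) }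
  · intro h
    have last : ∀ i, i + 2 = n → i = n - 1 - 1 := fun i hi => by omega
    have last' : ∀ i, i + 3 = n → i = n - 1 - 2 := fun i hi => by omega
    refine ⟨fun i _ j _ hij => hij ▸ h.braid i (by omega),
      fun i _ j hj hij => h.commute i j hij hj, fun i _ hi => last' i hi ▸ h.braid_b,
      fun i _ hi => h.commute_b i (by omega), fun i _ hi => hi ▸ h.artin4_t,
      fun i hi h1 => h.commute_t i h1 hi, h.commute_t_b, fun i _ hi => last i hi ▸ h.alt_eq,
      fun i _ j _ hi hj => last i hi ▸ last' j hj ▸ h.sq_eq, h.pow_w,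
      fun i _ hi => (h.commute_w i (by omega)).conj_eq, h.commute_w_t.conj_eq,
      fun i _ hi => last i hi ▸ h.conj_w_last, fun i _ hi => last i hi ▸ h.conj_w_b⟩

namespace IsZFamily

variable {k m : ℕ} {x : ℕ → G} {t u : G} (h : IsZFamily (k + 2) m x t u)
include h

theorem commute_conj_inv_ordProd {i : ℕ} (hi : i + 2 ≤ k + 2) :
    Commute (MulAut.conj (ordProd x (k + 2))⁻¹ u) (x i) := by
  have hsc : SemiconjBy (ordProd x (k + 2)) (x i) (x (i + 1)) :=
    h.semiconjBy_ordProd (by omega)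
  simpa only [SemiconjBy.conj_inv_eq hsc] using (h.commute_u (i + 1) (by omega) (by omega)).map
    (MulAut.conj (ordProd x (k + 2))⁻¹)

theorem commute_t_conj_inv_ordProd : Commute t (MulAut.conj (ordProd x (k + 2))⁻¹ u) := by
  have hK : Commute t (ordProd (fun i => x (i + 1)) (k + 1)) :=
    Commute.ordProd_right fun i _ => h.commute_t (i + 1) (by omega) (by omega)
  have e : MulAut.conj (ordProd x (k + 2))⁻¹ u = (ordProd (fun i => x (i + 1)) (k + 1))⁻¹ *
      ((x 0)⁻¹ * u * x 0) * ordProd (fun i => x (i + 1)) (k + 1) := by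
    rw [ordProd_succ, MulAut.conj_apply]; group
  rw [e]
  exact (hK.inv_right.mul_right h.commute_t_conj).mul_right hK

theorem conj_ordProd_mul_ordProd_conj :
    MulAut.conj (ordProd (fun i => x (i + 1)) (k + 1) * ordProd x (k + 2))
      (MulAut.conj (ordProd x (k + 2))⁻¹ u) = u := by
  have hK : Commute (ordProd (fun i => x (i + 1)) (k + 1)) u :=
    (Commute.ordProd_right fun i _ => h.commute_u (i + 1) (by omega) (by omega)).symm
  calc _ = MulAut.conj (ordProd (fun i => x (i + 1)) (k + 1)) u := by
        simp only [MulAut.conj_apply]; group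
    _ = u := Commute.conj_eq hK

theorem conj_ordProd_mul_ordProd_pred :
    MulAut.conj (ordProd (fun i => x (i + 1)) (k + 1) * ordProd x (k + 2)) (x k) =
      MulAut.conj (ordProd (fun i => x (i + 2)) k)⁻¹ (x 1) := by
  have hΔ : SemiconjBy (ordProd x (k + 2)) (x k) (x (k + 1)) := h.semiconjBy_ordProd (by omega)
  have hL : SemiconjBy (ordProd (fun i => x (i + 2)) k * ordProd (fun i => x (i + 1)) (k + 1))
      (x (k + 1)) (x 1) := h.tail.semiconjBy_last
  rw [map_mul, MulAut.mul_apply, hΔ.conj_eq, ← hL.conj_eq, map_mul, MulAut.mul_apply,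
    conj_inv_conj]

theorem toIsBFamily :
    IsBFamily (k + 2) m x (MulAut.conj (MulAut.conj (ordProd x (k + 2))⁻¹ u) (x (k + 1))) t
      (MulAut.conj (ordProd x (k + 2))⁻¹ u) := by
  set w := MulAut.conj (ordProd x (k + 2))⁻¹ u
  set g := ordProd (fun i => x (i + 1)) (k + 1) * ordProd x (k + 2)
  set L := ordProd (fun i => x (i + 2)) k
  have hwx : ∀ i, i + 2 ≤ k + 2 → MulAut.conj w (x i) = x i := fun i hi =>
    Commute.conj_eq (h.commute_conj_inv_ordProd hi)
  have hwt : Commute w t := h.commute_t_conj_inv_ordProd.symm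
  have hg_last : MulAut.conj g (x (k + 1)) = x 0 := SemiconjBy.conj_eq h.semiconjBy_last
  have hg_w : MulAut.conj g w = u := h.conj_ordProd_mul_ordProd_conj
  have hg_b : MulAut.conj g (MulAut.conj w (x (k + 1))) = MulAut.conj u (x 0) := by
    rw [conj_conj_apply, hg_w, hg_last]
  have hg_pred : MulAut.conj g (x k) = MulAut.conj L⁻¹ (x 1) := h.conj_ordProd_mul_ordProd_pred
  have hL0 : Commute L (x 0) := h.commute_ordProd_tail_tail.symm
  have hLu : Commute L u :=
    (Commute.ordProd_right fun i _ => h.commute_u (i + 2) (by omega) (by omega)).symm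
  have hq : w * x (k + 1) * w * x (k + 1) = x (k + 1) * w * x (k + 1) * w := by
    apply (MulAut.conj g).injective
    simpa only [map_mul, hg_w, hg_last] using h.artin4_u
  refine
    { toIsBraidFamily := h.toIsBraidFamily
      artin4_t := h.artin4_t
      commute_t := h.commute_t
      pow_w := by rw [← map_pow, h.pow_u, map_one]
      commute_w := fun i hi => h.commute_conj_inv_ordProd hi
      commute_w_t := hwt
      conj_w_last := rfl
      conj_w_b := conj_conj_eq_iff_artin4.mpr hq
      commute_b := fun i hi => by
        simpa only [hwx i (by omega)] using
          (h.commute i (k + 1) (by omega) (by omega)).symm.map (MulAut.conj w)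
      commute_t_b := by
        simpa only [Commute.conj_eq hwt] using
          (h.commute_t (k + 1) (by omega) (by omega)).map (MulAut.conj w)
      braid_b := ?braid_b
      alt_eq := ?alt_eq
      sq_eq := ?sq_eq }
  all_goals simp only [Nat.add_sub_cancel, Nat.reduceSubDiff]
  case braid_b =>
    simpa only [map_mul, hwx k (by omega)] using
      congrArg (MulAut.conj w) (h.braid k (by omega)).symm
  case alt_eq =>
    apply (MulAut.conj g).injective
    rw [map_alt, map_alt, hg_last, hg_b]
    exact alt_conj_eq_of_pow_eq_one h.artin4_u h.pow_u
  case sq_eq =>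
    apply (MulAut.conj g).injective
    simp only [map_pow, map_mul, hg_last, hg_b, hg_pred]
    apply (MulAut.conj L).injective
    simp only [map_pow, map_mul, conj_conj_inv, conj_conj_apply L u, Commute.conj_eq hL0,
      Commute.conj_eq hLu]
    exact sq_mul_conj_mul_eq (h.braid 0 (by omega)) (h.commute_u 1 (by omega) (by omega))
      h.artin4_u

end IsZFamily

namespace IsBFamily

variable {k m : ℕ} {x : ℕ → G} {b t w : G} (h : IsBFamily (k + 2) m x b t w)
include h

theorem commute_conj_ordProd {i : ℕ} (h1 : 1 ≤ i) (h2 : i < k + 2) :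
    Commute (MulAut.conj (ordProd x (k + 2)) w) (x i) := by
  obtain ⟨j, rfl⟩ : ∃ j, i = j + 1 := ⟨i - 1, by omega⟩
  have hsc : SemiconjBy (ordProd x (k + 2)) (x j) (x (j + 1)) := h.semiconjBy_ordProd (by omega)
  simpa only [SemiconjBy.conj_eq hsc] using
    (h.commute_w j (by omega)).map (MulAut.conj (ordProd x (k + 2)))

theorem conj_ordProd_mul_ordProd :
    MulAut.conj (ordProd (fun i => x (i + 1)) (k + 1) * ordProd x (k + 2)) w =
      MulAut.conj (ordProd x (k + 2)) w := by
  have hΔ : SemiconjBy (ordProd x (k + 2)) (ordProd x (k + 1))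
      (ordProd (fun i => x (i + 1)) (k + 1)) := h.semiconjBy_ordProd_ordProd
  have hK : Commute (ordProd x (k + 1)) w :=
    (Commute.ordProd_right fun i _ => h.commute_w i (by omega)).symm
  rw [← hΔ.eq, map_mul, MulAut.mul_apply, Commute.conj_eq hK]

theorem toIsZFamily : IsZFamily (k + 2) m x t (MulAut.conj (ordProd x (k + 2)) w) := by
  set g := ordProd (fun i => x (i + 1)) (k + 1) * ordProd x (k + 2)
  have hg_w : MulAut.conj g w = MulAut.conj (ordProd x (k + 2)) w := h.conj_ordProd_mul_ordProd
  have hg_last : MulAut.conj g (x (k + 1)) = x 0 := SemiconjBy.conj_eq h.semiconjBy_last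
  have hb : w * x (k + 1) * w⁻¹ = b := h.conj_w_last
  have hq : w * x (k + 1) * w * x (k + 1) = x (k + 1) * w * x (k + 1) * w :=
    conj_conj_eq_iff_artin4.mp (by rw [hb]; exact h.conj_w_b)
  have hK : Commute t (ordProd (fun i => x (i + 1)) (k + 1)) :=
    Commute.ordProd_right fun i _ => h.commute_t (i + 1) (by omega) (by omega)
  have e : (x 0)⁻¹ * MulAut.conj (ordProd x (k + 2)) w * x 0 =
      MulAut.conj (ordProd (fun i => x (i + 1)) (k + 1)) w := by
    rw [ordProd_succ, MulAut.conj_apply, MulAut.conj_apply]; group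
  exact
    { toIsBraidFamily := h.toIsBraidFamily
      pow_u := by rw [← map_pow, h.pow_w, map_one]
      commute_t := h.commute_t
      commute_u := fun i h1 h2 => h.commute_conj_ordProd h1 h2
      artin4_t := h.artin4_t
      artin4_u := by simpa only [map_mul, hg_w, hg_last] using congrArg (MulAut.conj g) hq
      commute_t_conj := by
        rw [e]
        exact (hK.mul_right h.commute_w_t.symm).mul_right hK.inv_right }

end IsBFamily

end Families

section Presentation

def genFamily {k : ℕ} {β : Type*} (rels : Set (FreeGroup (Fin k ⊕ β))) (i : ℕ) :
    PresentedGroup rels :=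
  if h : i < k then PresentedGroup.of (Sum.inl ⟨i, h⟩) else 1

theorem genFamily_val {k : ℕ} {β : Type*} (rels : Set (FreeGroup (Fin k ⊕ β))) (i : Fin k) :
    genFamily rels i = PresentedGroup.of (Sum.inl i) := by
  simp [genFamily]

theorem map_genFamily {k : ℕ} {β γ : Type*} {rels : Set (FreeGroup (Fin k ⊕ β))}
    {rels' : Set (FreeGroup (Fin k ⊕ γ))} (f : PresentedGroup rels →* PresentedGroup rels')
    (hf : ∀ i, f (PresentedGroup.of (Sum.inl i)) = PresentedGroup.of (Sum.inl i)) (i : ℕ) :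
    f (genFamily rels i) = genFamily rels' i := by
  unfold genFamily
  split_ifs <;> simp [hf]

theorem isZFamily_presentedGroup {n m : ℕ} (hn : 2 ≤ n) :
    IsZFamily (n - 1) m (genFamily (zrels n m)) (PresentedGroup.of (Sum.inr false))
      (PresentedGroup.of (Sum.inr true)) := by
  refine (lift_zrels_iff hn).mp fun r hr => ?_
  have hmk : FreeGroup.lift (zAssign n (genFamily (zrels n m))
      (PresentedGroup.of (Sum.inr false)) (PresentedGroup.of (Sum.inr true))) =
      PresentedGroup.mk (zrels n m) := by
    ext (i | _ | _)
    · simp only [FreeGroup.lift_apply_of, zAssign, Sum.elim_inl, genFamily_val]; rfl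
    all_goals rfl
  rw [hmk]
  exact PresentedGroup.one_of_mem hr

theorem isBFamily_presentedGroup {n m : ℕ} (hn : 3 ≤ n) :
    IsBFamily (n - 1) m (genFamily (brels n m)) (PresentedGroup.of (Sum.inr 0))
      (PresentedGroup.of (Sum.inr 1)) (PresentedGroup.of (Sum.inr 2)) := by
  refine (lift_brels_iff hn).mp fun r hr => ?_
  have hmk : FreeGroup.lift (bAssign n (genFamily (brels n m)) (PresentedGroup.of (Sum.inr 0))
      (PresentedGroup.of (Sum.inr 1)) (PresentedGroup.of (Sum.inr 2))) =
      PresentedGroup.mk (brels n m) := by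
    ext (i | j)
    · simp only [FreeGroup.lift_apply_of, bAssign, Sum.elim_inl, genFamily_val]; rfl
    · fin_cases j <;> rfl
  rw [hmk]
  exact PresentedGroup.one_of_mem hr

variable (k m : ℕ)

def zToB : Z (k + 3) m →* B (k + 3) m :=
  PresentedGroup.toGroup ((lift_zrels_iff (by omega)).mpr
    (isBFamily_presentedGroup (n := k + 3) (m := m) (by omega)).toIsZFamily)

def bToZ : B (k + 3) m →* Z (k + 3) m :=
  PresentedGroup.toGroup ((lift_brels_iff (by omega)).mpr
    (isZFamily_presentedGroup (n := k + 3) (m := m) (by omega)).toIsBFamily)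

theorem zToB_of_inl (i : Fin (k + 3 - 1)) :
    zToB k m (PresentedGroup.of (Sum.inl i)) = PresentedGroup.of (Sum.inl i) := by
  simp [zToB, zAssign, genFamily_val]

theorem zToB_of_t :
    zToB k m (PresentedGroup.of (Sum.inr false)) = PresentedGroup.of (Sum.inr 1) := by
  simp [zToB, zAssign]

theorem zToB_of_u : zToB k m (PresentedGroup.of (Sum.inr true)) =
    MulAut.conj (ordProd (genFamily (brels (k + 3) m)) (k + 2))
      (PresentedGroup.of (Sum.inr 2)) := by
  simp [zToB, zAssign]

theorem bToZ_of_inl (i : Fin (k + 3 - 1)) :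
    bToZ k m (PresentedGroup.of (Sum.inl i)) = PresentedGroup.of (Sum.inl i) := by
  simp [bToZ, bAssign, genFamily_val]

theorem bToZ_of_t :
    bToZ k m (PresentedGroup.of (Sum.inr 1)) = PresentedGroup.of (Sum.inr false) := by
  simp [bToZ, bAssign]

theorem bToZ_of_w : bToZ k m (PresentedGroup.of (Sum.inr 2)) =
    MulAut.conj (ordProd (genFamily (zrels (k + 3) m)) (k + 2))⁻¹
      (PresentedGroup.of (Sum.inr true)) := by
  simp [bToZ, bAssign]

theorem bToZ_of_b : bToZ k m (PresentedGroup.of (Sum.inr 0)) =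
    MulAut.conj (bToZ k m (PresentedGroup.of (Sum.inr 2)))
      (genFamily (zrels (k + 3) m) (k + 1)) := by
  simp [bToZ, bAssign]

theorem bToZ_comp_zToB : (bToZ k m).comp (zToB k m) = MonoidHom.id _ := by
  have hΔ : bToZ k m (ordProd (genFamily (brels (k + 3) m)) (k + 2)) =
      ordProd (genFamily (zrels (k + 3) m)) (k + 2) := by
    simp only [map_ordProd, map_genFamily _ (bToZ_of_inl k m)]
  refine PresentedGroup.ext fun a => ?_
  rcases a with i | _ | _
  · rw [MonoidHom.comp_apply, zToB_of_inl, bToZ_of_inl, MonoidHom.id_apply]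
  · rw [MonoidHom.comp_apply, zToB_of_t, bToZ_of_t, MonoidHom.id_apply]
  · rw [MonoidHom.comp_apply, zToB_of_u, map_conj, hΔ, bToZ_of_w, conj_conj_inv,
      MonoidHom.id_apply]

theorem zToB_comp_bToZ : (zToB k m).comp (bToZ k m) = MonoidHom.id _ := by
  have hΔ : zToB k m (ordProd (genFamily (zrels (k + 3) m)) (k + 2)) =
      ordProd (genFamily (brels (k + 3) m)) (k + 2) := by
    simp only [map_ordProd, map_genFamily _ (zToB_of_inl k m)]
  have hw : zToB k m (bToZ k m (PresentedGroup.of (Sum.inr 2))) =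
      PresentedGroup.of (Sum.inr 2) := by
    rw [bToZ_of_w, map_conj, map_inv, hΔ, zToB_of_u, conj_inv_conj]
  refine PresentedGroup.ext fun a => ?_
  rcases a with i | j
  · rw [MonoidHom.comp_apply, bToZ_of_inl, zToB_of_inl, MonoidHom.id_apply]
  fin_cases j
  · show zToB k m (bToZ k m (PresentedGroup.of (Sum.inr 0))) = PresentedGroup.of (Sum.inr 0)
    rw [bToZ_of_b, map_conj, hw, map_genFamily _ (zToB_of_inl k m)]
    exact (isBFamily_presentedGroup (n := k + 3) (m := m) (by omega)).conj_w_last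
  · show zToB k m (bToZ k m (PresentedGroup.of (Sum.inr 1))) = PresentedGroup.of (Sum.inr 1)
    rw [bToZ_of_t, zToB_of_t]
  · exact hw

theorem hprodB_eq_ordProd (n m : ℕ) : hprodB n m = ordProd (genFamily (brels n m)) (n - 1) := by
  simp [hprodB, ordProd, genFamily_val]

end Presentation

theorem stmt_5_general (n m : ℕ) (hn : 3 ≤ n) :
    ∃ e : Z n m ≃* B n m,
      (∀ i : Fin (n - 1),
        e (PresentedGroup.of (Sum.inl i)) = PresentedGroup.of (Sum.inl i)) ∧
      e (PresentedGroup.of (Sum.inr false)) = PresentedGroup.of (Sum.inr 1) ∧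
      e (PresentedGroup.of (Sum.inr true)) =
        hprodB n m * PresentedGroup.of (Sum.inr 2) * (hprodB n m)⁻¹ := by
  obtain ⟨k, rfl⟩ : ∃ k, n = k + 3 := ⟨n - 3, by omega⟩
  refine ⟨MonoidHom.toMulEquiv _ _ (bToZ_comp_zToB k m) (zToB_comp_bToZ k m), zToB_of_inl k m,
    zToB_of_t k m, ?_⟩
  rw [hprodB_eq_ordProd]
  exact zToB_of_u k m

theorem stmt_5 (n m : ℕ) (hn : 3 ≤ n) (hm : 2 ≤ m) :
    ∃ e : Z n m ≃* B n m,
      (∀ i : Fin (n - 1),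
        e (PresentedGroup.of (Sum.inl i)) = PresentedGroup.of (Sum.inl i)) ∧
      e (PresentedGroup.of (Sum.inr false)) = PresentedGroup.of (Sum.inr 1) ∧
      e (PresentedGroup.of (Sum.inr true)) =
        hprodB n m * PresentedGroup.of (Sum.inr 2) * (hprodB n m)⁻¹ :=
  stmt_5_general n m hn

end Stmt5
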